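/- Let n ≥ 1 and β > 0, and let ν_β be the measure on ℝ^n with dν_β(x) = min{1,|x|^{−β}} dx. For every axis-parallel cube K ⊂ ℝ^n with center c and side length ℓ > 0 satisfying |c| ≥ 2√n·ℓ, one has ν_β(2K) ≤ 2^n·(5/2)^β·ν_β(K), where 2K denotes the cube with the same center and side length 2ℓ. -/

import Mathlib

open MeasureTheory ENNReal

/-- The measure `dν_β(x) = min{1, |x|^{-β}} dx` on `ℝⁿ`. -/
noncomputable def nuMeas (n : ℕ) (β : ℝ) : Measure (EuclideanSpace ℝ (Fin n)) :=
  volume.withDensity fun x => ENNReal.ofReal (min 1 (‖x‖ ^ (-β)))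

/-- The axis-parallel cube with center `c` and side length `ℓ`. -/
def cubeC (n : ℕ) (c : EuclideanSpace ℝ (Fin n)) (ℓ : ℝ) :
    Set (EuclideanSpace ℝ (Fin n)) :=
  {x | ∀ i, |x i - c i| ≤ ℓ / 2}

/-!
Every point of `2K` has norm at least `‖c‖ - √n ℓ ≥ ‖c‖ / 2` and every point of `K` has norm
at most `‖c‖ + √n ℓ / 2 ≤ 5 ‖c‖ / 4`. Since the density `min 1 (r ^ (-β))` is antitone in `r`,
its value on `2K` is at most `(5/2)^β` times its value on `K`, and the Lebesgue measures of the
two cubes differ by the factor `2ⁿ`.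
-/

lemma EuclideanSpace.norm_le_sqrt_card_mul {ι : Type*} [Fintype ι] {x : EuclideanSpace ℝ ι}
    {r : ℝ} (hr : 0 ≤ r) (hx : ∀ i, |x i| ≤ r) : ‖x‖ ≤ √(Fintype.card ι) * r := by
  calc ‖x‖ = √(∑ i, |x i| ^ 2) := by simp [EuclideanSpace.norm_eq]
    _ ≤ √(∑ _ : ι, r ^ 2) := by gcongr with i; exact hx i
    _ = √(Fintype.card ι) * r := by
      rw [Finset.sum_const, Finset.card_univ, nsmul_eq_mul,
        Real.sqrt_mul (Nat.cast_nonneg _), Real.sqrt_sq hr]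

lemma cubeC_eq_preimage (n : ℕ) (c : EuclideanSpace ℝ (Fin n)) (L : ℝ) :
    cubeC n c L = (MeasurableEquiv.toLp 2 (Fin n → ℝ)).symm ⁻¹'
      Set.univ.pi fun i => Set.Icc (c i - L / 2) (c i + L / 2) := by
  ext x
  simp only [cubeC, Set.mem_preimage, Set.mem_univ_pi, Set.mem_Icc, abs_le]
  refine forall_congr' fun i => ?_
  show -(L / 2) ≤ x i - c i ∧ x i - c i ≤ L / 2 ↔ c i - L / 2 ≤ x i ∧ x i ≤ c i + L / 2
  constructor <;> rintro ⟨h₁, h₂⟩ <;> constructor <;> linarith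

lemma volume_cubeC (n : ℕ) (c : EuclideanSpace ℝ (Fin n)) (L : ℝ) :
    volume (cubeC n c L) = ENNReal.ofReal L ^ n := by
  rw [cubeC_eq_preimage, (EuclideanSpace.volume_preserving_symm_measurableEquiv_toLp (Fin n))
    |>.measure_preimage (MeasurableSet.univ_pi fun _ => measurableSet_Icc).nullMeasurableSet,
    volume_pi_pi]
  simp

lemma norm_sub_le_of_mem_cubeC {n : ℕ} {c x : EuclideanSpace ℝ (Fin n)} {L : ℝ} (hL : 0 ≤ L)
    (hx : x ∈ cubeC n c L) : ‖x - c‖ ≤ √n * (L / 2) := by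
  simpa using EuclideanSpace.norm_le_sqrt_card_mul (x := x - c) (by positivity) hx

lemma antitoneOn_min_one_rpow_neg {β : ℝ} (hβ : 0 ≤ β) :
    AntitoneOn (fun r : ℝ => min 1 (r ^ (-β))) (Set.Ioi 0) := fun _ ha _ _ hab =>
  min_le_min le_rfl (Real.rpow_le_rpow_of_nonpos ha hab (neg_nonpos.mpr hβ))

lemma min_one_rpow_neg_le_of_le_mul {β t a b : ℝ} (hβ : 0 ≤ β) (ht : 1 ≤ t) (ha : 0 < a)
    (hb : 0 < b) (hba : b ≤ t * a) : min 1 (a ^ (-β)) ≤ t ^ β * min 1 (b ^ (-β)) := by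
  have ht₀ : 0 < t := one_pos.trans_le ht
  rw [mul_min_of_nonneg _ _ (by positivity), mul_one]
  refine le_min (min_le_of_left_le (Real.one_le_rpow ht hβ)) (min_le_of_right_le ?_)
  calc a ^ (-β) = t ^ β * (t * a) ^ (-β) := by
        rw [Real.mul_rpow ht₀.le ha.le, ← mul_assoc, ← Real.rpow_add ht₀, add_neg_cancel,
          Real.rpow_zero, one_mul]
    _ ≤ t ^ β * b ^ (-β) := mul_le_mul_of_nonneg_left
        (Real.rpow_le_rpow_of_nonpos hb hba (neg_nonpos.mpr hβ)) (by positivity)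

lemma nuMeas_le_of_le_norm {n : ℕ} {β a : ℝ} (hβ : 0 ≤ β) (ha : 0 < a)
    {s : Set (EuclideanSpace ℝ (Fin n))} (hs : ∀ x ∈ s, a ≤ ‖x‖) :
    nuMeas n β s ≤ ENNReal.ofReal (min 1 (a ^ (-β))) * volume s := by
  rw [nuMeas, withDensity_apply', ← setLIntegral_const]
  exact setLIntegral_mono measurable_const fun x hx => ENNReal.ofReal_le_ofReal <|
    antitoneOn_min_one_rpow_neg hβ ha (ha.trans_le (hs x hx)) (hs x hx)

lemma le_nuMeas_of_norm_le {n : ℕ} {β b : ℝ} (hβ : 0 ≤ β)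
    {s : Set (EuclideanSpace ℝ (Fin n))} (hs : ∀ x ∈ s, 0 < ‖x‖ ∧ ‖x‖ ≤ b) :
    ENNReal.ofReal (min 1 (b ^ (-β))) * volume s ≤ nuMeas n β s := by
  rw [nuMeas, withDensity_apply', ← setLIntegral_const]
  refine setLIntegral_mono (by fun_prop) fun x hx => ENNReal.ofReal_le_ofReal <|
    antitoneOn_min_one_rpow_neg hβ (hs x hx).1 ((hs x hx).1.trans_le (hs x hx).2) (hs x hx).2

/-- doubling away from the origin.  For every cube `K` with center `c`
and side length `ℓ > 0` such that `|c| ≥ 2√n·ℓ`, one has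
`ν_β(2K) ≤ 2ⁿ (5/2)^β ν_β(K)`. -/
theorem statement16 (n : ℕ) (hn : 1 ≤ n) (β : ℝ) (hβ : 0 < β)
    (c : EuclideanSpace ℝ (Fin n)) (ℓ : ℝ) (hℓ : 0 < ℓ)
    (hc : 2 * Real.sqrt n * ℓ ≤ ‖c‖) :
    nuMeas n β (cubeC n c (2 * ℓ))
      ≤ ENNReal.ofReal (2 ^ n * ((5 : ℝ) / 2) ^ β) * nuMeas n β (cubeC n c ℓ) := by
  have hn₀ : (0 : ℝ) < n := by exact_mod_cast hn
  have hc₀ : 0 < ‖c‖ := lt_of_lt_of_le (by positivity) hc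
  have hupper : nuMeas n β (cubeC n c (2 * ℓ))
      ≤ ENNReal.ofReal (min 1 ((‖c‖ / 2) ^ (-β))) * volume (cubeC n c (2 * ℓ)) :=
    nuMeas_le_of_le_norm hβ.le (by positivity) fun x hx => by
      linarith [norm_sub_le_of_mem_cubeC (by positivity) hx, norm_sub_norm_le c x,
        norm_sub_rev x c]
  have hlower : ENNReal.ofReal (min 1 ((5 / 4 * ‖c‖) ^ (-β))) * volume (cubeC n c ℓ)
      ≤ nuMeas n β (cubeC n c ℓ) :=
    le_nuMeas_of_norm_le hβ.le fun x hx => by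
      have := norm_sub_le_of_mem_cubeC hℓ.le hx
      constructor <;> linarith [norm_sub_norm_le c x, norm_sub_rev x c, norm_le_insert' x c]
  have hdensity := min_one_rpow_neg_le_of_le_mul hβ.le (by norm_num : (1 : ℝ) ≤ 5 / 2)
    (by positivity : 0 < ‖c‖ / 2) (by positivity : 0 < 5 / 4 * ‖c‖) (by linarith)
  calc nuMeas n β (cubeC n c (2 * ℓ))
      ≤ ENNReal.ofReal (min 1 ((‖c‖ / 2) ^ (-β))) * volume (cubeC n c (2 * ℓ)) := hupper
    _ = 2 ^ n * ENNReal.ofReal (min 1 ((‖c‖ / 2) ^ (-β))) * ENNReal.ofReal ℓ ^ n := by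
      rw [volume_cubeC, ENNReal.ofReal_mul zero_le_two, ENNReal.ofReal_ofNat, mul_pow]; ring
    _ ≤ 2 ^ n * ENNReal.ofReal ((5 / 2) ^ β * min 1 ((5 / 4 * ‖c‖) ^ (-β)))
          * ENNReal.ofReal ℓ ^ n := by gcongr
    _ = ENNReal.ofReal (2 ^ n * ((5 : ℝ) / 2) ^ β)
          * (ENNReal.ofReal (min 1 ((5 / 4 * ‖c‖) ^ (-β))) * volume (cubeC n c ℓ)) := by
      rw [volume_cubeC, ENNReal.ofReal_mul (by positivity), ENNReal.ofReal_mul (by positivity),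
        ENNReal.ofReal_pow zero_le_two, ENNReal.ofReal_ofNat]; ring
    _ ≤ _ := by gcongr
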